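/- arXiv:2102.06104 — 7 statements merged into one kernel-verified Lean document; each statement's English description precedes it below -/
import Mathlib

section
/- For every abelian map ψ on a group G, every g ∈ G and every n ≥ 0, one has δⁿ(g) = g · ∏_{i=1}^{n} ψ^i(g)^{(-1)^i · C(n,i)}, where ψ^i denotes the i-fold composite of ψ, C(n,i) is the binomial coefficient, and the product is taken in increasing order of i. -/
/-- `aDelta ψ g = g · ψ(g⁻¹)`, the map `δ = 1 - ψ`. -/
def aDelta {G : Type*} [Group G] (ψ : G → G) (g : G) : G := g * ψ g⁻¹

/-- `aPsi ψ n g = (δⁿ(g))⁻¹ · g`, the map `ψ_n = -(1-ψ)ⁿ + 1` (so `ψ_0 = 0`, `ψ_1 = ψ`). -/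
def aPsi {G : Type*} [Group G] (ψ : G → G) (n : ℕ) (g : G) : G :=
  ((aDelta ψ)^[n] g)⁻¹ * g

/-!
The image `A` of `ψ` is an abelian subgroup, and `δ(g c) = g c ψ(c)⁻¹ ψ(g)⁻¹` for every `c`.
Hence `δⁿ(g) = g cₙ` with `cₙ ∈ A` satisfying `cₙ₊₁ = cₙ ψ(cₙ)⁻¹ ψ(g)⁻¹`. In the abelian
group `A`, on which `ψ` acts as an endomorphism, this recursion is solved by the alternating
binomial product, by Pascal's rule.
-/

open Finset
open scoped IsMulCommutative

lemma neg_one_pow_mul_choose_succ_succ (n i : ℕ) :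
    (-1 : ℤ) ^ (i + 1) * ((n + 1).choose (i + 1) : ℤ) =
      (-1) ^ (i + 1) * (n.choose (i + 1) : ℤ) - (-1) ^ i * (n.choose i : ℤ) := by
  push_cast [Nat.choose_succ_succ, pow_succ]
  ring

lemma prod_iterate_zpow_neg_one_pow_mul_choose_succ {H : Type*} [CommGroup H] (φ : H →* H)
    (b : H) (n : ℕ) :
    ∏ i ∈ range (n + 1), (φ^[i] b) ^ ((-1 : ℤ) ^ (i + 1) * ((n + 1).choose (i + 1) : ℤ)) =
      (∏ i ∈ range n, (φ^[i] b) ^ ((-1 : ℤ) ^ (i + 1) * (n.choose (i + 1) : ℤ))) *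
        (φ (∏ i ∈ range n, (φ^[i] b) ^ ((-1 : ℤ) ^ (i + 1) * (n.choose (i + 1) : ℤ))))⁻¹ *
          b⁻¹ := by
  simp only [neg_one_pow_mul_choose_succ_succ, zpow_sub, prod_mul_distrib, prod_inv_distrib,
    map_prod, map_zpow, ← Function.iterate_succ_apply' φ]
  rw [prod_range_succ, prod_range_succ' (fun i => φ^[i] b ^ ((-1 : ℤ) ^ i * (n.choose i : ℤ))),
    Nat.choose_succ_self]
  simp only [Nat.cast_zero, mul_zero, zpow_zero, mul_one, pow_zero, Nat.choose_zero_right,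
    Nat.cast_one, Function.iterate_zero_apply, zpow_one, mul_inv, mul_assoc]

lemma aDelta_mul {G : Type*} [Group G] (ψ : G →* G) (g c : G) :
    aDelta ψ (g * c) = g * c * (ψ c)⁻¹ * (ψ g)⁻¹ := by
  simp only [aDelta, mul_inv_rev, map_mul, map_inv, mul_assoc]

namespace MonoidHom

variable {G : Type*} [Group G]

def restrictRange (ψ : G →* G) : ψ.range →* ψ.range :=
  ψ.rangeRestrict.comp ψ.range.subtype

lemma iterate_succ_apply_eq_coe_restrictRange (ψ : G →* G) (g : G) (i : ℕ) :
    ψ^[i + 1] g = (ψ.restrictRange^[i] (ψ.rangeRestrict g) : G) := by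
  induction i with
  | zero => rfl
  | succ i ih => rw [Function.iterate_succ_apply', ih, Function.iterate_succ_apply']; rfl

lemma list_prod_map_range_iterate_zpow (ψ : G →* G) [IsMulCommutative ψ.range] (g : G)
    (e : ℕ → ℤ) (n : ℕ) :
    ((List.range n).map fun i => (ψ^[i + 1] g) ^ e i).prod =
      ((∏ i ∈ Finset.range n, (ψ.restrictRange^[i] (ψ.rangeRestrict g)) ^ e i : ψ.range) : G) := by
  change _ = (((List.range n).map _).prod : ψ.range).val
  simp only [Subgroup.val_list_prod, List.map_map]
  refine congrArg List.prod (List.map_congr_left fun i _ => ?_)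
  exact congrArg (· ^ e i) (ψ.iterate_succ_apply_eq_coe_restrictRange g i)

end MonoidHom

/-- For an abelian map ψ, `δⁿ(g) = g · ∏_{i=1}^{n} ψ^i(g)^{(-1)^i C(n,i)}`. -/
theorem stmt0 {G : Type*} [Group G] (ψ : G → G)
    (hψ : ∀ a b : G, ψ (a * b) = ψ a * ψ b)
    (hab : ∀ a b : G, ψ a * ψ b = ψ b * ψ a)
    (n : ℕ) (g : G) :
    (aDelta ψ)^[n] g =
      g * (((List.range n).map (fun i =>
        (ψ^[i + 1] g) ^ ((-1 : ℤ) ^ (i + 1) * (n.choose (i + 1) : ℤ)))).prod) := by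
  let Ψ : G →* G := MonoidHom.mk' ψ hψ
  have : IsMulCommutative Ψ.range :=
    ⟨⟨by rintro ⟨_, a, rfl⟩ ⟨_, b, rfl⟩; exact Subtype.ext (hab a b)⟩⟩
  have hprod (n : ℕ) := Ψ.list_prod_map_range_iterate_zpow g
    (fun i => (-1 : ℤ) ^ (i + 1) * (n.choose (i + 1) : ℤ)) n
  change (aDelta Ψ)^[n] g = g * ((List.range n).map fun i => (Ψ^[i + 1] g) ^ _).prod
  induction n with
  | zero => simp
  | succ n ih =>
    rw [Function.iterate_succ_apply', ih, hprod, hprod,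
      prod_iterate_zpow_neg_one_pow_mul_choose_succ, aDelta_mul]
    simp only [Subgroup.coe_mul, Subgroup.coe_inv, mul_assoc]
    rfl
end

section
/- For every abelian map ψ on a group G and every n ≥ 1, the map ψ_n satisfies ψ_n(g) = ∏_{i=1}^{n} ψ^i(g)^{(-1)^{i-1} · C(n,i)} for all g ∈ G (product in increasing order of i, ψ^i the i-fold composite of ψ, C(n,i) the binomial coefficient); consequently ψ_n is itself an abelian map on G, i.e., ψ_n is a group endomorphism of G and ψ_n(a)·ψ_n(b) = ψ_n(b)·ψ_n(a) for all a, b ∈ G. -/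
/-!
Since `ψ` is an endomorphism, `δ(g · y) = g · y · ψ(y)⁻¹ · ψ(g)⁻¹`, so every iterate `δⁿ(g)` is
`g` times an element of the commutative subgroup `ψ(G)`: `δⁿ(g) = g · Qₙ⁻¹`. Writing `ψ(G)`
additively, with `σ` the restriction of `ψ` and `x = ψ(g)`, we have `Q₀ = 0` and
`Qₙ₊₁ = (1 - σ) Qₙ + x`, whence `Qₙ = ∑_{i<n} (-1)^i C(n, i+1) σ^i x` by Pascal's rule.
So `ψₙ(g) = Qₙ`, which is multiplicative in `g` and takes values in a commutative group.
-/

open Finset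
open scoped IsMulCommutative

section CommGroup

variable {K : Type*} [CommGroup K]

def binomialIterateProd (σ : K →* K) (n : ℕ) (x : K) : K :=
  ∏ i ∈ range n, (σ^[i] x) ^ ((-1 : ℤ) ^ i * n.choose (i + 1))

theorem binomialIterateProd_succ (σ : K →* K) (n : ℕ) (x : K) :
    binomialIterateProd σ (n + 1) x =
      binomialIterateProd σ n x * (x * (σ (binomialIterateProd σ n x))⁻¹) := by
  have h_shift : x * (σ (binomialIterateProd σ n x))⁻¹ =
      ∏ i ∈ range (n + 1), (σ^[i] x) ^ ((-1 : ℤ) ^ i * n.choose i) := by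
    rw [prod_range_succ', binomialIterateProd, map_prod, ← prod_inv_distrib, mul_comm]
    simp [Function.iterate_succ_apply', pow_succ, ← zpow_neg]
  have h_extend : binomialIterateProd σ n x =
      ∏ i ∈ range (n + 1), (σ^[i] x) ^ ((-1 : ℤ) ^ i * n.choose (i + 1)) := by
    simp [binomialIterateProd, prod_range_succ]
  rw [h_shift, h_extend, ← prod_mul_distrib, binomialIterateProd]
  refine prod_congr rfl fun i _ => ?_
  rw [← zpow_add, Nat.choose_succ_succ']
  congr 1
  push_cast
  ring

theorem binomialIterateProd_eq_list_prod (σ : K →* K) (n : ℕ) (x : K) :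
    binomialIterateProd σ n x =
      ((List.range n).map fun i => (σ^[i] x) ^ ((-1 : ℤ) ^ i * n.choose (i + 1))).prod := by
  rw [binomialIterateProd, prod_eq_multiset_prod]
  rfl

theorem binomialIterateProd_mul (σ : K →* K) (n : ℕ) (x y : K) :
    binomialIterateProd σ n (x * y) = binomialIterateProd σ n x * binomialIterateProd σ n y := by
  simp only [binomialIterateProd, iterate_map_mul, mul_zpow, prod_mul_distrib]

end CommGroup

namespace MonoidHom

variable {G : Type*} [Group G]

theorem isMulCommutative_range {H : Type*} [Group H] (φ : G →* H)
    (h : ∀ a b, φ a * φ b = φ b * φ a) : IsMulCommutative φ.range :=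
  ⟨⟨by rintro ⟨_, a, rfl⟩ ⟨_, b, rfl⟩; exact Subtype.ext (h a b)⟩⟩

def rangeEnd (φ : G →* G) : φ.range →* φ.range :=
  φ.rangeRestrict.comp φ.range.subtype

theorem coe_iterate_rangeEnd_rangeRestrict (φ : G →* G) (i : ℕ) (g : G) :
    ((φ.rangeEnd^[i] (φ.rangeRestrict g) : φ.range) : G) = φ^[i + 1] g := by
  induction i with
  | zero => rfl
  | succ i ih =>
    rw [Function.iterate_succ_apply', Function.iterate_succ_apply' _ (i + 1), ← ih]
    rfl

variable (φ : G →* G) [IsMulCommutative φ.range]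

theorem iterate_aDelta (m : ℕ) (g : G) :
    (aDelta φ)^[m] g =
      g * ((binomialIterateProd φ.rangeEnd m (φ.rangeRestrict g) : φ.range) : G)⁻¹ := by
  induction m with
  | zero => simp [binomialIterateProd]
  | succ m ih =>
    rw [Function.iterate_succ_apply', ih, binomialIterateProd_succ]
    set q := binomialIterateProd φ.rangeEnd m (φ.rangeRestrict g)
    have h_comm : (q * (φ.rangeRestrict g * (φ.rangeEnd q)⁻¹))⁻¹ =
        q⁻¹ * (φ.rangeEnd q * (φ.rangeRestrict g)⁻¹) := by
      rw [mul_inv_rev, mul_inv_rev, inv_inv, mul_comm]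
    rw [← InvMemClass.coe_inv (q * _), h_comm]
    simp only [aDelta, mul_inv_rev, inv_inv, map_mul, map_inv, mul_assoc]
    rfl

theorem aPsi_eq_binomialIterateProd (n : ℕ) (g : G) :
    aPsi φ n g = binomialIterateProd φ.rangeEnd n (φ.rangeRestrict g) := by
  rw [aPsi, iterate_aDelta, mul_inv_rev, inv_inv, inv_mul_cancel_right]

end MonoidHom

theorem stmt1_general {G : Type*} [Group G] (ψ : G → G)
    (hψ : ∀ a b : G, ψ (a * b) = ψ a * ψ b)
    (hab : ∀ a b : G, ψ a * ψ b = ψ b * ψ a)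
    (n : ℕ) :
    (∀ g : G, aPsi ψ n g =
      (((List.range n).map (fun i =>
        (ψ^[i + 1] g) ^ ((-1 : ℤ) ^ i * (n.choose (i + 1) : ℤ)))).prod)) ∧
    (∀ a b : G, aPsi ψ n (a * b) = aPsi ψ n a * aPsi ψ n b) ∧
    (∀ a b : G, aPsi ψ n a * aPsi ψ n b = aPsi ψ n b * aPsi ψ n a) := by
  obtain ⟨φ, rfl⟩ : ∃ φ : G →* G, ⇑φ = ψ := ⟨MonoidHom.mk' ψ hψ, rfl⟩
  have := φ.isMulCommutative_range hab
  simp only [φ.aPsi_eq_binomialIterateProd]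
  refine ⟨fun g => ?_, fun a b => ?_, fun a b => ?_⟩
  · rw [binomialIterateProd_eq_list_prod, SubmonoidClass.coe_list_prod, List.map_map]
    simp only [Function.comp_def, SubgroupClass.coe_zpow, φ.coe_iterate_rangeEnd_rangeRestrict]
  · rw [map_mul, binomialIterateProd_mul, Subgroup.coe_mul]
  · rw [← Subgroup.coe_mul, mul_comm', Subgroup.coe_mul]

/-- For an abelian map ψ and `n ≥ 1`,
`ψ_n(g) = ∏_{i=1}^{n} ψ^i(g)^{(-1)^{i-1} C(n,i)}`, and consequently `ψ_n` is an
abelian map: an endomorphism with commuting values. -/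
theorem stmt1 {G : Type*} [Group G] (ψ : G → G)
    (hψ : ∀ a b : G, ψ (a * b) = ψ a * ψ b)
    (hab : ∀ a b : G, ψ a * ψ b = ψ b * ψ a)
    (n : ℕ) (hn : 1 ≤ n) :
    (∀ g : G, aPsi ψ n g =
      (((List.range n).map (fun i =>
        (ψ^[i + 1] g) ^ ((-1 : ℤ) ^ i * (n.choose (i + 1) : ℤ)))).prod)) ∧
    (∀ a b : G, aPsi ψ n (a * b) = aPsi ψ n a * aPsi ψ n b) ∧
    (∀ a b : G, aPsi ψ n a * aPsi ψ n b = aPsi ψ n b * aPsi ψ n a) :=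
  stmt1_general ψ hψ hab n
end

section
/- For every abelian map ψ on a group G, all integers m, n ≥ 0 and all g, h ∈ G, the elements ψ_m(g) and ψ_n(h) commute: ψ_m(g)·ψ_n(h) = ψ_n(h)·ψ_m(g). -/
section

variable {G : Type*} [Group G] (ψ : G → G)

lemma aPsi_zero (g : G) : aPsi ψ 0 g = 1 := by
  simp [aPsi]

lemma aPsi_succ (n : ℕ) (g : G) :
    aPsi ψ (n + 1) g = (ψ ((aDelta ψ)^[n] g)⁻¹)⁻¹ * aPsi ψ n g := by
  simp only [aPsi, Function.iterate_succ_apply', aDelta, mul_inv_rev, mul_assoc]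

lemma aPsi_mem_closure_range (n : ℕ) (g : G) :
    aPsi ψ n g ∈ Subgroup.closure (Set.range ψ) := by
  induction n with
  | zero => rw [aPsi_zero]; exact one_mem _
  | succ n ih =>
    rw [aPsi_succ]
    exact mul_mem (inv_mem (Subgroup.subset_closure ⟨_, rfl⟩)) ih

end

theorem stmt3_general {G : Type*} [Group G] (ψ : G → G)
    (hab : ∀ a b : G, ψ a * ψ b = ψ b * ψ a)
    (m n : ℕ) (g h : G) :
    aPsi ψ m g * aPsi ψ n h = aPsi ψ n h * aPsi ψ m g := by
  have : IsMulCommutative (Subgroup.closure (Set.range ψ)) :=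
    Subgroup.isMulCommutative_closure <| by
      rintro _ ⟨a, rfl⟩ _ ⟨b, rfl⟩
      exact hab a b
  exact setLike_mul_comm (aPsi_mem_closure_range ψ m g) (aPsi_mem_closure_range ψ n h)

/-- For an abelian map ψ, the elements `ψ_m(g)` and `ψ_n(h)` commute. -/
theorem stmt3 {G : Type*} [Group G] (ψ : G → G)
    (hψ : ∀ a b : G, ψ (a * b) = ψ a * ψ b)
    (hab : ∀ a b : G, ψ a * ψ b = ψ b * ψ a)
    (m n : ℕ) (g h : G) :
    aPsi ψ m g * aPsi ψ n h = aPsi ψ n h * aPsi ψ m g :=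
  stmt3_general ψ hab m n g h
end

section
/- Let ψ be an abelian map on a group G and let m ≥ 0. Then ψ_m is an abelian map, and applying the same construction to ψ_m yields (ψ_m)_n = ψ_{mn} for every n ≥ 0; explicitly, if δ_m : G → G is defined by δ_m(g) = g·ψ_m(g⁻¹), then (δ_m)ⁿ(g⁻¹)·g = ψ_{mn}(g) for all g ∈ G. -/
section

open scoped IsMulCommutative

variable {G : Type*} [Group G]

theorem MonoidHom.isMulCommutative_range_s5 {H : Type*} [Group H] (f : G →* H)
    (hf : ∀ a b : G, Commute (f a) (f b)) : IsMulCommutative f.range :=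
  isMulCommutative_iff.mpr <| by
    rintro ⟨_, a, rfl⟩ ⟨_, b, rfl⟩
    exact Subtype.ext (hf a b)

theorem iterate_aDelta_apply (ψ : G → G) (n : ℕ) (g : G) :
    (aDelta ψ)^[n] g = g * (aPsi ψ n g)⁻¹ := by
  simp [aPsi]

theorem aDelta_aPsi_eq_iterate (ψ : G → G) (n : ℕ)
    (hinv : ∀ g : G, aPsi ψ n g⁻¹ = (aPsi ψ n g)⁻¹) :
    aDelta (aPsi ψ n) = (aDelta ψ)^[n] := by
  funext g
  rw [aDelta, hinv, iterate_aDelta_apply]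

theorem aPsi_aPsi (ψ : G → G) (m n : ℕ) (hinv : ∀ g : G, aPsi ψ m g⁻¹ = (aPsi ψ m g)⁻¹) :
    aPsi (aPsi ψ m) n = aPsi ψ (m * n) := by
  funext g
  rw [aPsi, aDelta_aPsi_eq_iterate ψ m hinv, ← Function.iterate_mul, aPsi]

theorem aDelta_apply (ψ : G →* G) (g : G) : aDelta ψ g = g * (ψ g)⁻¹ := by
  rw [aDelta, map_inv]

theorem aPsi_zero_apply (ψ : G → G) (g : G) : aPsi ψ 0 g = 1 := by
  simp [aPsi]

theorem aPsi_succ_apply (ψ : G →* G) (n : ℕ) (g : G) :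
    aPsi ψ (n + 1) g = ψ g * (ψ (aPsi ψ n g))⁻¹ * aPsi ψ n g := by
  rw [aPsi, Function.iterate_succ_apply', iterate_aDelta_apply, aDelta_apply, map_mul, map_inv]
  group

def aPsiHom (ψ : G →* G) [IsMulCommutative ψ.range] : ℕ → (G →* ψ.range)
  | 0 => 1
  | n + 1 => ψ.rangeRestrict * (ψ.rangeRestrict.comp (ψ.range.subtype.comp (aPsiHom ψ n)))⁻¹ *
      aPsiHom ψ n

theorem coe_aPsiHom_apply (ψ : G →* G) [IsMulCommutative ψ.range] (n : ℕ) (g : G) :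
    (aPsiHom ψ n g : G) = aPsi ψ n g := by
  induction n with
  | zero => simp [aPsiHom, aPsi_zero_apply]
  | succ n ih => simp [aPsiHom, aPsi_succ_apply, ih]

theorem aPsi_map_mul (ψ : G →* G) [IsMulCommutative ψ.range] (n : ℕ) (a b : G) :
    aPsi ψ n (a * b) = aPsi ψ n a * aPsi ψ n b := by
  simp only [← coe_aPsiHom_apply, map_mul, Subgroup.coe_mul]

theorem aPsi_map_inv (ψ : G →* G) [IsMulCommutative ψ.range] (n : ℕ) (g : G) :
    aPsi ψ n g⁻¹ = (aPsi ψ n g)⁻¹ := by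
  simp only [← coe_aPsiHom_apply, map_inv, Subgroup.coe_inv]

theorem aPsi_commute (ψ : G →* G) [IsMulCommutative ψ.range] (n : ℕ) (a b : G) :
    Commute (aPsi ψ n a) (aPsi ψ n b) := by
  simp only [← coe_aPsiHom_apply]
  exact congrArg Subtype.val (mul_comm (aPsiHom ψ n a) (aPsiHom ψ n b))

end

/-- For an abelian map ψ and `m ≥ 0`: `ψ_m` is an abelian map, and applying the
same construction to `ψ_m` gives `(ψ_m)_n = ψ_{mn}`. -/
theorem stmt5 {G : Type*} [Group G] (ψ : G → G)
    (hψ : ∀ a b : G, ψ (a * b) = ψ a * ψ b)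
    (hab : ∀ a b : G, ψ a * ψ b = ψ b * ψ a)
    (m : ℕ) :
    (∀ a b : G, aPsi ψ m (a * b) = aPsi ψ m a * aPsi ψ m b) ∧
    (∀ a b : G, aPsi ψ m a * aPsi ψ m b = aPsi ψ m b * aPsi ψ m a) ∧
    (∀ (n : ℕ) (g : G), ((aDelta (aPsi ψ m))^[n] g)⁻¹ * g = aPsi ψ (m * n) g) := by
  let f : G →* G := MonoidHom.mk' ψ hψ
  have : IsMulCommutative f.range := f.isMulCommutative_range_s5 hab
  exact ⟨aPsi_map_mul f m, aPsi_commute f m,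
    fun n g => congrFun (aPsi_aPsi ψ m n (aPsi_map_inv f m)) g⟩
end

section
/- Let ψ be an abelian map on a group G. Then the image δ(G) = { g·ψ(g⁻¹) : g ∈ G } is a subgroup of G (in particular, δ(g)·δ(h) = δ(g·ψ(g⁻¹)·h·ψ(g)) for all g, h ∈ G). Moreover, the operation ∘_1 is commutative if and only if δ(G) is abelian, i.e., if and only if (g·ψ(g⁻¹))·(h·ψ(h⁻¹)) = (h·ψ(h⁻¹))·(g·ψ(g⁻¹)) for all g, h ∈ G. -/
/-- `g ∘_n h = g · ψ_n(g⁻¹) · h · ψ_n(g)`. -/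
def aCirc {G : Type*} [Group G] (ψ : G → G) (n : ℕ) (g h : G) : G :=
  g * aPsi ψ n g⁻¹ * h * aPsi ψ n g

/-! In `δ(g)·δ(h) = g ψ(g)⁻¹ · h ψ(h)⁻¹`, the factor `ψ(g)⁻¹` can be moved past `h` at the cost of
conjugating `h` by it, and the conjugating factors are invisible to `ψ` because its image is
abelian; this exhibits the product as `δ(g ψ(g⁻¹) h ψ(g))`. The same trick writes `δ(g)⁻¹` as
`δ(ψ(g) g⁻¹ ψ(g)⁻¹)`, so `δ(G)` is a subgroup. Finally `g ∘₁ h = δ(g) δ(h) ψ(h) ψ(g)`, and the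
last two factors commute. -/

namespace MonoidHom

variable {G : Type*} [Group G] (f : G →* G)

theorem aDelta_apply (g : G) : aDelta f g = g * (f g)⁻¹ := by
  rw [aDelta, map_inv]

theorem aDelta_one : aDelta f 1 = 1 := by
  simp [aDelta]

theorem aPsi_one (g : G) : aPsi f 1 g = f g := by
  rw [aPsi, Function.iterate_one, aDelta_apply]
  group

theorem aCirc_one_eq (g h : G) : aCirc f 1 g h = aDelta f g * aDelta f h * (f h * f g) := by
  simp only [aCirc, aPsi_one, aDelta_apply, map_inv]
  group

theorem aDelta_mul_aDelta (hf : ∀ a b : G, Commute (f a) (f b)) (g h : G) :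
    aDelta f g * aDelta f h = aDelta f (g * f g⁻¹ * h * f g) := by
  rw [map_inv f g]
  have hfx : f (g * (f g)⁻¹ * h * f g) = f g * f h := by
    simp only [map_mul, map_inv]
    rw [mul_assoc (f g), (hf (f g) h).inv_left.eq]
    group
  rw [aDelta_apply, aDelta_apply, aDelta_apply, hfx, mul_inv_rev, (hf h g).inv_inv.eq]
  group

theorem aDelta_inv (hf : ∀ a b : G, Commute (f a) (f b)) (g : G) :
    (aDelta f g)⁻¹ = aDelta f (f g * g⁻¹ * (f g)⁻¹) := by
  have hfy : f (f g * g⁻¹ * (f g)⁻¹) = (f g)⁻¹ := by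
    rw [map_mul, map_mul, map_inv, map_inv, (hf (f g) g).inv_right.eq, mul_inv_cancel_right]
  rw [aDelta_apply, aDelta_apply, hfy, mul_inv_rev, inv_inv]
  group

def aDeltaSubgroup (hf : ∀ a b : G, Commute (f a) (f b)) : Subgroup G where
  carrier := Set.range (aDelta f)
  one_mem' := ⟨1, aDelta_one f⟩
  mul_mem' := by
    rintro _ _ ⟨g, rfl⟩ ⟨h, rfl⟩
    exact ⟨_, (aDelta_mul_aDelta f hf g h).symm⟩
  inv_mem' := by
    rintro _ ⟨g, rfl⟩
    exact ⟨_, (aDelta_inv f hf g).symm⟩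

theorem aCirc_one_comm_iff (hf : ∀ a b : G, Commute (f a) (f b)) :
    (∀ g h : G, aCirc f 1 g h = aCirc f 1 h g) ↔
      ∀ g h : G, aDelta f g * aDelta f h = aDelta f h * aDelta f g := by
  simp only [aCirc_one_eq, (hf _ _).eq]
  exact forall₂_congr fun g h => mul_left_inj _

end MonoidHom

/-- For an abelian map ψ: `δ(G)` is a subgroup of `G`, with
`δ(g)·δ(h) = δ(g·ψ(g⁻¹)·h·ψ(g))`, and `∘_1` is commutative if and only if
`δ(G)` is abelian. -/
theorem stmt12 {G : Type*} [Group G] (ψ : G → G)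
    (hψ : ∀ a b : G, ψ (a * b) = ψ a * ψ b)
    (hab : ∀ a b : G, ψ a * ψ b = ψ b * ψ a) :
    (∃ H : Subgroup G, (H : Set G) = Set.range (aDelta ψ)) ∧
    (∀ g h : G, aDelta ψ g * aDelta ψ h = aDelta ψ (g * ψ g⁻¹ * h * ψ g)) ∧
    ((∀ g h : G, aCirc ψ 1 g h = aCirc ψ 1 h g) ↔
      (∀ g h : G, (g * ψ g⁻¹) * (h * ψ h⁻¹) = (h * ψ h⁻¹) * (g * ψ g⁻¹))) := by
  let f : G →* G := MonoidHom.mk' ψ hψ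
  have hf : ∀ a b : G, Commute (f a) (f b) := hab
  exact ⟨⟨f.aDeltaSubgroup hf, rfl⟩, f.aDelta_mul_aDelta hf, f.aCirc_one_comm_iff hf⟩
end

section
/- Let ψ be an abelian map on a group G. Then ψ is fixed point free (ψ(g) = g implies g = 1) if and only if ψ_n is fixed point free for every n ≥ 1. -/
theorem Function.eq_of_iterate_eq {α : Type*} {f : α → α} {b : α}
    (hf : ∀ x, f x = b → x = b) (n : ℕ) {x : α} (hx : f^[n] x = b) : x = b := by
  induction n generalizing x with
  | zero => exact hx
  | succ k ih => exact hf x (ih (by rwa [Function.iterate_succ_apply] at hx))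

section

variable {G : Type*} [Group G] (ψ : G → G)

theorem aDelta_eq_one_iff (g : G) : aDelta ψ g = 1 ↔ ψ g⁻¹ = g⁻¹ := by
  rw [aDelta, mul_eq_one_iff_inv_eq, eq_comm]

theorem aPsi_eq_self_iff (n : ℕ) (g : G) : aPsi ψ n g = g ↔ (aDelta ψ)^[n] g = 1 := by
  rw [aPsi, mul_eq_right, inv_eq_one]

theorem aPsi_one (hψ : ∀ a b : G, ψ (a * b) = ψ a * ψ b) (g : G) : aPsi ψ 1 g = ψ g := by
  rw [aPsi, Function.iterate_one, aDelta, mul_inv_rev, inv_mul_cancel_right,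
    show ψ g⁻¹ = (ψ g)⁻¹ from map_inv (MonoidHom.mk' ψ hψ) g, inv_inv]

theorem eq_one_of_aDelta_eq_one (hfix : ∀ g : G, ψ g = g → g = 1) (g : G)
    (hg : aDelta ψ g = 1) : g = 1 :=
  inv_eq_one.mp (hfix _ ((aDelta_eq_one_iff ψ g).mp hg))

end

theorem stmt16_general {G : Type*} [Group G] (ψ : G → G)
    (hψ : ∀ a b : G, ψ (a * b) = ψ a * ψ b) :
    (∀ g : G, ψ g = g → g = 1) ↔
      (∀ n : ℕ, 1 ≤ n → ∀ g : G, aPsi ψ n g = g → g = 1) := by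
  constructor
  · intro hfix n _ g hg
    exact Function.eq_of_iterate_eq (eq_one_of_aDelta_eq_one ψ hfix) n
      ((aPsi_eq_self_iff ψ n g).mp hg)
  · intro hfix g hg
    exact hfix 1 le_rfl g ((aPsi_one ψ hψ g).trans hg)

/-- ψ is fixed point free if and only if `ψ_n` is fixed point free for all `n ≥ 1`. -/
theorem stmt16 {G : Type*} [Group G] (ψ : G → G)
    (hψ : ∀ a b : G, ψ (a * b) = ψ a * ψ b)
    (hab : ∀ a b : G, ψ a * ψ b = ψ b * ψ a) :
    (∀ g : G, ψ g = g → g = 1) ↔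
      (∀ n : ℕ, 1 ≤ n → ∀ g : G, aPsi ψ n g = g → g = 1) :=
  stmt16_general ψ hψ
end

section
/- Let h be a prime, let k ≥ 1 divide h − 1, and let b be a unit of ZMod h of multiplicative order exactly k. For each integer n ≥ 0, let φ_n : ZMod k → Aut(ZMod h) be the group homomorphism sending the class of 1 to multiplication by b^n (well-defined since (b^n)^k = 1), and let F_n = ZMod h ⋊_{φ_n} ZMod k be the corresponding semidirect product. Then for all m, n ≥ 0, the groups F_m and F_n are isomorphic if and only if gcd(m, k) = gcd(n, k). -/
/-!
For `N` and `G` abelian, `(x, g)` is central in `N ⋊[φ] G` exactly when `x` is fixed by the action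
and `g ∈ ker φ`. Here `φ i (ofAdd y)` is multiplication by `b ^ (i * y)`, so its kernel is the
`i`-torsion of `ZMod k`, of order `gcd(k, i)`, while the fixed points are all of `ZMod h` if
`k ∣ i` and only `0` otherwise (`b ^ i ≠ 1` in the field `ZMod h`). The order of the centre,
`h * k` resp. `gcd(k, i)`, therefore determines `gcd(k, i)`, since `gcd(k, i) ≤ k < h * k`.

Conversely, if `gcd(m, k) = gcd(n, k)` then `u * n ≡ m (mod k)` for some unit `u` of `ZMod k`,
and rescaling the `ZMod k` factor by `u` turns `φ m` into `φ n`.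
-/

open Multiplicative

namespace SemidirectProduct

variable {N G : Type*} [CommGroup N] [CommGroup G] {φ : G →* MulAut N}

theorem mem_center_iff_of_comm {x : N ⋊[φ] G} :
    x ∈ Subgroup.center (N ⋊[φ] G) ↔ (∀ g, φ g x.left = x.left) ∧ x.right ∈ φ.ker := by
  rw [Subgroup.mem_center_iff, MonoidHom.mem_ker]
  constructor
  · intro hx
    refine ⟨fun g ↦ by simpa using congrArg left (hx (inr g)), MulEquiv.ext fun n ↦ ?_⟩
    have := congrArg left (hx (inl n))
    simp only [mul_left, left_inl, right_inl, map_one, MulAut.one_apply] at this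
    exact mul_left_cancel (this.symm.trans (mul_comm n x.left))
  · rintro ⟨hfix, hker⟩ y
    ext
    · simp [hfix, hker, mul_comm]
    · simp [mul_comm]

variable (φ) in
theorem card_center_of_comm :
    Nat.card (Subgroup.center (N ⋊[φ] G)) =
      Nat.card {n : N // ∀ g, φ g n = n} * Nat.card φ.ker :=
  Nat.card_prod _ _ ▸ Nat.card_congr
    { toFun x := (⟨x.1.left, (mem_center_iff_of_comm.mp x.2).1⟩,
        ⟨x.1.right, (mem_center_iff_of_comm.mp x.2).2⟩)
      invFun p := ⟨⟨p.1.1, p.2.1⟩, mem_center_iff_of_comm.mpr ⟨p.1.2, p.2.2⟩⟩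
      left_inv _ := rfl
      right_inv _ := rfl }

end SemidirectProduct

theorem ZMod.exists_unit_mul_natCast_eq_of_gcd_eq {k m n : ℕ} [NeZero k]
    (h : m.gcd k = n.gcd k) : ∃ u : (ZMod k)ˣ, u * (n : ZMod k) = m := by
  obtain ⟨m', k', hm'k', hm, hk⟩ := Nat.exists_coprime m k
  obtain ⟨n', k'', hn'k'', hn, hk''⟩ := Nat.exists_coprime n k
  set d := n.gcd k
  rw [h] at hm hk
  have hd : d ≠ 0 := Nat.gcd_ne_zero_right (NeZero.ne k)
  obtain rfl : k'' = k' := Nat.eq_of_mul_eq_mul_right (Nat.pos_of_ne_zero hd) (hk''.symm.trans hk)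
  obtain ⟨u, hu⟩ := ZMod.unitsMap_surjective ⟨d, hk⟩
    (ZMod.unitOfCoprime m' hm'k' * (ZMod.unitOfCoprime n' hn'k'')⁻¹)
  have hu' : (u : ZMod k).val * n' ≡ m' [MOD k''] := by
    rw [← ZMod.natCast_eq_natCast_iff, Nat.cast_mul, ZMod.natCast_val, ← ZMod.unitsMap_val ⟨d, hk⟩,
      hu, ← ZMod.coe_unitOfCoprime n' hn'k'', ← ZMod.coe_unitOfCoprime m' hm'k', ← Units.val_mul,
      inv_mul_cancel_right]
  refine ⟨u, ?_⟩
  rw [← ZMod.natCast_zmod_val (u : ZMod k), ← Nat.cast_mul, hn, hm, ZMod.natCast_eq_natCast_iff,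
    ← mul_assoc]
  simpa only [← hk] using hu'.mul_right' d

namespace Units

variable {M : Type*} [Monoid M] {u : Mˣ} {k : ℕ}

theorem val_pow_eq_val_pow_iff (hu : orderOf u = k) {a c : ℕ} :
    (u : M) ^ a = (u : M) ^ c ↔ (a : ZMod k) = c := by
  rw [← val_pow_eq_pow_val, ← val_pow_eq_pow_val, val_inj, pow_eq_pow_iff_modEq, hu,
    ZMod.natCast_eq_natCast_iff]

theorem val_pow_eq_one_iff (hu : orderOf u = k) {a : ℕ} : (u : M) ^ a = 1 ↔ (a : ZMod k) = 0 := by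
  simpa using val_pow_eq_val_pow_iff hu (a := a) (c := 0)

end Units

namespace Metacyclic

variable {h k : ℕ} {b : (ZMod h)ˣ}
  {φ : ℕ → (Multiplicative (ZMod k) →* MulAut (Multiplicative (ZMod h)))}
  (hφ : ∀ (i : ℕ) (x : ZMod h),
    φ i (ofAdd (1 : ZMod k)) (ofAdd x) = ofAdd ((b : ZMod h) ^ i * x))
include hφ

theorem apply_ofAdd_ofAdd [NeZero k] (i : ℕ) (y : ZMod k) (x : ZMod h) :
    φ i (ofAdd y) (ofAdd x) = ofAdd ((b : ZMod h) ^ (i * y.val) * x) := by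
  have hpow (j : ℕ) (x : ZMod h) :
      (φ i (ofAdd 1) ^ j) (ofAdd x) = ofAdd ((b : ZMod h) ^ (i * j) * x) := by
    induction j generalizing x with
    | zero => simp
    | succ j ih =>
      rw [pow_succ', MulAut.mul_apply, ih, hφ, ← mul_assoc, ← pow_add, mul_add_one, add_comm]
  have hy : ofAdd y = ofAdd (1 : ZMod k) ^ y.val := by
    rw [← ofAdd_nsmul, nsmul_one, ZMod.natCast_zmod_val]
  rw [hy, map_pow, hpow]

theorem apply_eq_one_iff [NeZero k] (i : ℕ) (g : Multiplicative (ZMod k)) :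
    φ i g = 1 ↔ (b : ZMod h) ^ (i * g.toAdd.val) = 1 := by
  constructor
  · intro hg
    have := apply_ofAdd_ofAdd hφ i g.toAdd 1
    rw [ofAdd_toAdd, hg, MulAut.one_apply, mul_one] at this
    exact (ofAdd.injective this).symm
  · intro hg
    ext x
    exact (apply_ofAdd_ofAdd hφ i g.toAdd x.toAdd).trans (by rw [hg, one_mul]; rfl)

theorem ker_eq_ker_powMonoidHom [NeZero k] (hb : orderOf b = k) (i : ℕ) :
    (φ i).ker = (powMonoidHom i).ker := by
  ext g
  rw [MonoidHom.mem_ker, MonoidHom.mem_ker, apply_eq_one_iff hφ, Units.val_pow_eq_one_iff hb,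
    powMonoidHom_apply, ← toAdd_eq_zero, toAdd_pow, nsmul_eq_mul, Nat.cast_mul, ZMod.natCast_val,
    ZMod.cast_id]

theorem card_ker [NeZero k] (hb : orderOf b = k) (i : ℕ) : Nat.card (φ i).ker = k.gcd i := by
  rw [ker_eq_ker_powMonoidHom hφ hb, IsCyclic.card_powMonoidHom_ker, Nat.card_congr toAdd,
    Nat.card_zmod]

theorem card_fixedPoints [NeZero h] [NeZero k] (hh : h.Prime) (hb : orderOf b = k) (i : ℕ) :
    Nat.card {x // ∀ g, φ i g x = x} = if k ∣ i then h else 1 := by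
  split_ifs with hki
  · have htriv (g : Multiplicative (ZMod k)) : φ i g = 1 := by
      rw [apply_eq_one_iff hφ, Units.val_pow_eq_one_iff hb, Nat.cast_mul,
        (ZMod.natCast_eq_zero_iff i k).mpr hki, zero_mul]
    rw [Nat.card_congr (Equiv.subtypeUnivEquiv fun x g ↦ by rw [htriv]; rfl),
      Nat.card_congr toAdd, Nat.card_zmod]
  · have : Fact h.Prime := ⟨hh⟩
    have hbi : (b : ZMod h) ^ i ≠ 1 := by
      rwa [Ne, Units.val_pow_eq_one_iff hb, ZMod.natCast_eq_zero_iff]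
    have hfix (x : {x // ∀ g, φ i g x = x}) : x.1 = 1 := by
      have := x.2 (ofAdd 1)
      rw [← ofAdd_toAdd x.1, hφ] at this
      exact congrArg ofAdd ((mul_left_eq_self₀.mp (ofAdd.injective this)).resolve_left hbi)
    exact Nat.card_eq_one_iff_unique.mpr
      ⟨⟨fun x y ↦ Subtype.ext ((hfix x).trans (hfix y).symm)⟩, ⟨⟨1, fun _ ↦ map_one _⟩⟩⟩

theorem card_center [NeZero h] [NeZero k] (hh : h.Prime) (hb : orderOf b = k) (i : ℕ) :
    Nat.card (Subgroup.center (Multiplicative (ZMod h) ⋊[φ i] Multiplicative (ZMod k))) =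
      (if k ∣ i then h else 1) * k.gcd i := by
  rw [SemidirectProduct.card_center_of_comm, card_fixedPoints hφ hh hb, card_ker hφ hb]

theorem nonempty_mulEquiv_of_unit_mul_eq [NeZero k] (hb : orderOf b = k) {m n : ℕ}
    (u : (ZMod k)ˣ) (hu : u * (n : ZMod k) = m) :
    Nonempty ((Multiplicative (ZMod h) ⋊[φ m] Multiplicative (ZMod k)) ≃*
      (Multiplicative (ZMod h) ⋊[φ n] Multiplicative (ZMod k))) := by
  refine ⟨SemidirectProduct.congr (MulEquiv.refl _)
    (DistribMulAction.toAddEquiv (ZMod k) u).toMultiplicative fun g ↦ MulEquiv.ext fun x ↦ ?_⟩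
  change φ m (ofAdd g.toAdd) (ofAdd x.toAdd) = φ n (ofAdd (u * g.toAdd)) (ofAdd x.toAdd)
  rw [apply_ofAdd_ofAdd hφ, apply_ofAdd_ofAdd hφ]
  congr 2
  rw [Units.val_pow_eq_val_pow_iff hb]
  push_cast [ZMod.natCast_val, ZMod.cast_id]
  rw [← hu]
  ring

end Metacyclic

theorem Nat.gcd_eq_gcd_of_ite_mul_gcd_eq {h k m n : ℕ} (hh : 1 < h) (hk : 0 < k)
    (H : (if k ∣ m then h else 1) * k.gcd m = (if k ∣ n then h else 1) * k.gcd n) :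
    k.gcd m = k.gcd n := by
  have hle (i : ℕ) : k.gcd i ≤ k := Nat.le_of_dvd hk (Nat.gcd_dvd_left k i)
  by_cases hm : k ∣ m <;> by_cases hn : k ∣ n <;>
    simp only [hm, hn, if_true, if_false, one_mul] at H
  · rw [Nat.gcd_eq_left hm, Nat.gcd_eq_left hn]
  · rw [Nat.gcd_eq_left hm] at H
    nlinarith [hle n]
  · rw [Nat.gcd_eq_left hn] at H
    nlinarith [hle m]
  · exact H

theorem stmt19_general (h k : ℕ) (hh : h.Prime)
    (b : (ZMod h)ˣ) (hb : orderOf b = k)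
    (φ : ℕ → (Multiplicative (ZMod k) →* MulAut (Multiplicative (ZMod h))))
    (hφ : ∀ (i : ℕ) (x : ZMod h),
      (φ i (Multiplicative.ofAdd (1 : ZMod k))) (Multiplicative.ofAdd x) =
        Multiplicative.ofAdd (((b : ZMod h) ^ i) * x))
    (m n : ℕ) :
    Nonempty
      ((Multiplicative (ZMod h) ⋊[φ m] Multiplicative (ZMod k)) ≃*
        (Multiplicative (ZMod h) ⋊[φ n] Multiplicative (ZMod k))) ↔
      Nat.gcd m k = Nat.gcd n k := by
  have : NeZero h := ⟨hh.ne_zero⟩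
  have : NeZero k := ⟨hb ▸ (orderOf_pos b).ne'⟩
  constructor
  · rintro ⟨e⟩
    have hcenter := Nat.card_congr (Subgroup.centerCongr e).toEquiv
    rw [Metacyclic.card_center hφ hh hb, Metacyclic.card_center hφ hh hb] at hcenter
    rw [Nat.gcd_comm m, Nat.gcd_comm n]
    exact Nat.gcd_eq_gcd_of_ite_mul_gcd_eq hh.one_lt (NeZero.pos k) hcenter
  · intro hgcd
    obtain ⟨u, hu⟩ := ZMod.exists_unit_mul_natCast_eq_of_gcd_eq hgcd
    exact Metacyclic.nonempty_mulEquiv_of_unit_mul_eq hφ hb u hu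

/-- Let `h` be a prime, `k ∣ h - 1` with `k ≥ 1`, and `b` a unit of `ZMod h` of
multiplicative order exactly `k`.  For `n ≥ 0` let `φ n : ZMod k → Aut (ZMod h)`
be the homomorphism sending the class of `1` to multiplication by `b^n`, and let
`F n = ZMod h ⋊[φ n] ZMod k`.  Then `F m ≅ F n` iff `gcd(m,k) = gcd(n,k)`. -/
theorem stmt19 (h k : ℕ) (hh : h.Prime) (hk : 1 ≤ k) (hdvd : k ∣ h - 1)
    (b : (ZMod h)ˣ) (hb : orderOf b = k)
    (φ : ℕ → (Multiplicative (ZMod k) →* MulAut (Multiplicative (ZMod h))))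
    (hφ : ∀ (i : ℕ) (x : ZMod h),
      (φ i (Multiplicative.ofAdd (1 : ZMod k))) (Multiplicative.ofAdd x) =
        Multiplicative.ofAdd (((b : ZMod h) ^ i) * x))
    (m n : ℕ) :
    Nonempty
      ((Multiplicative (ZMod h) ⋊[φ m] Multiplicative (ZMod k)) ≃*
        (Multiplicative (ZMod h) ⋊[φ n] Multiplicative (ZMod k))) ↔
      Nat.gcd m k = Nat.gcd n k :=
  stmt19_general h k hh b hb φ hφ m n
end
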